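/- The Lebesgue volume of the set Δ_ε := {(x,y,z) ∈ ℝ³ : x > 0, y > 0, z > 0, x ≥ y·z, y ≥ x·z, z ≥ x·y} is 1/4. (Δ_ε is the set of eigenvalue triples of embeddable K3 Markov matrices with pairwise distinct eigenvalues; equivalently, the volume equals the iterated integral ∫₀¹ ( ∫₀^z ∫_{z·x}^{x/z} dy dx + ∫_z¹ ∫_{x·z}^{z/x} dy dx ) dz = 1/4.) -/

import Mathlib

/-!
For `0 < x ≤ 1` the fibre of `Δε` over `(x, y)` is the interval `[x y, min (y / x) (x / y)]`
(and it is empty unless `0 < x, y ≤ 1`), so the slice of `Δε` at `x` has area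
`∫₀ˣ (y / x - x y) dy + ∫ₓ¹ (x / y - x y) dy = -x log x`, and `∫₀¹ -x log x dx = 1/4`.
The iterated integral has exactly these inner integrals.
-/

open MeasureTheory intervalIntegral

/-- The set of eigenvalue triples of embeddable K3 Markov matrices (with distinct
eigenvalues). -/
def Δε : Set (ℝ × ℝ × ℝ) :=
  {p | 0 < p.1 ∧ 0 < p.2.1 ∧ 0 < p.2.2 ∧
       p.2.1 * p.2.2 ≤ p.1 ∧ p.1 * p.2.2 ≤ p.2.1 ∧ p.1 * p.2.1 ≤ p.2.2}

open Real Set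
open scoped Interval

theorem MeasureTheory.Measure.prod_apply_eq_setLIntegral {α β : Type*} [MeasurableSpace α]
    [MeasurableSpace β] {μ : Measure α} {ν : Measure β} [SFinite ν] {s : Set (α × β)}
    (hs : MeasurableSet s) {t : Set α} (hst : ∀ p ∈ s, p.1 ∈ t) :
    μ.prod ν s = ∫⁻ x in t, ν (Prod.mk x ⁻¹' s) ∂μ := by
  rw [Measure.prod_apply hs, setLIntegral_eq_of_support_subset]
  intro x hx
  obtain ⟨y, hy⟩ := nonempty_of_measure_ne_zero hx
  exact hst _ hy

theorem setLIntegral_Ioc_ofReal_eq {f : ℝ → ℝ} {a b : ℝ} (hab : a ≤ b)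
    (hf : ContinuousOn f (Icc a b)) (hf₀ : ∀ x ∈ Ioc a b, 0 ≤ f x) :
    ∫⁻ x in Ioc a b, ENNReal.ofReal (f x) = ENNReal.ofReal (∫ x in a..b, f x) := by
  rw [integral_of_le hab, ofReal_integral_eq_lintegral_ofReal]
  · exact (hf.integrableOn_Icc).mono_set Ioc_subset_Icc_self
  · exact (ae_restrict_iff' measurableSet_Ioc).2 (ae_of_all _ hf₀)

theorem integral_id_div_sub_const_mul (x : ℝ) :
    ∫ y in (0 : ℝ)..x, (y / x - x * y) = x / 2 - x ^ 3 / 2 := by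
  rw [integral_sub (intervalIntegrable_id.div_const x) (intervalIntegrable_id.const_mul x),
    intervalIntegral.integral_div, intervalIntegral.integral_const_mul, integral_id]
  rcases eq_or_ne x 0 with rfl | hx
  · simp
  · field_simp; ring

theorem integral_const_div_sub_const_mul {x : ℝ} (hx : 0 < x) :
    ∫ y in x..(1 : ℝ), (x / y - x * y) = -(x * log x) - x / 2 + x ^ 3 / 2 := by
  have h0 : (0 : ℝ) ∉ [[x, 1]] := fun h ↦ by
    rcases mem_uIcc.1 h with ⟨h1, _⟩ | ⟨_, h2⟩ <;> linarith
  have hinv : IntervalIntegrable (fun y : ℝ ↦ x * (1 / y)) volume x 1 :=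
    (intervalIntegral.intervalIntegrable_one_div (fun y hy h ↦ h0 (h ▸ hy))
      continuousOn_id).const_mul x
  rw [show (fun y : ℝ ↦ x / y - x * y) = fun y ↦ x * (1 / y) - x * y by ext; ring,
    integral_sub hinv (intervalIntegrable_id.const_mul x), intervalIntegral.integral_const_mul,
    intervalIntegral.integral_const_mul, integral_one_div h0, integral_id, one_div, log_inv]
  ring

theorem integral_neg_mul_log : ∫ x in (0 : ℝ)..1, -(x * log x) = 1 / 4 := by
  have hderiv : ∀ x ∈ Ioo (0 : ℝ) 1,
      HasDerivAt (fun x ↦ x ^ 2 / 4 - x * log x * (x / 2)) (-(x * log x)) x := fun x hx ↦ by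
    have h := ((hasDerivAt_pow 2 x).div_const 4).sub
      ((hasDerivAt_mul_log hx.1.ne').mul ((hasDerivAt_id x).div_const 2))
    refine h.congr_deriv ?_
    norm_num; ring
  have hcont : Continuous fun x : ℝ ↦ x ^ 2 / 4 - x * log x * (x / 2) := by fun_prop
  rw [integral_eq_sub_of_hasDerivAt_of_le zero_le_one hcont.continuousOn hderiv
    (continuous_mul_log.neg.intervalIntegrable 0 1)]
  simp

theorem measurableSet_Δε : MeasurableSet Δε := by
  unfold Δε; measurability

theorem mem_Ioc_of_mem_Δε {x y z : ℝ} (h : (x, y, z) ∈ Δε) : x ∈ Ioc 0 1 ∧ y ∈ Ioc 0 1 := by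
  obtain ⟨hx, hy, hz, hyz, hxz, hxy⟩ := h
  refine ⟨⟨hx, ?_⟩, ⟨hy, ?_⟩⟩
  · nlinarith [mul_pos hx hz, mul_pos hy hz]
  · nlinarith [mul_pos hx hz, mul_pos hy hz]

theorem preimage_preimage_Δε_of_le {x y : ℝ} (hy : 0 < y) (hyx : y ≤ x) :
    Prod.mk y ⁻¹' (Prod.mk x ⁻¹' Δε) = Icc (x * y) (y / x) := by
  have hx : 0 < x := hy.trans_le hyx
  ext z
  simp only [Δε, mem_preimage, mem_ofPred_eq, mem_Icc, le_div_iff₀ hx]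
  constructor
  · rintro ⟨-, -, -, -, hxz, hxy⟩
    exact ⟨hxy, by linarith⟩
  · rintro ⟨hxy, hxz⟩
    have hz : 0 < z := (mul_pos hx hy).trans_le hxy
    exact ⟨hx, hy, hz, by nlinarith, by linarith, hxy⟩

theorem preimage_preimage_Δε_of_ge {x y : ℝ} (hx : 0 < x) (hxy : x ≤ y) :
    Prod.mk y ⁻¹' (Prod.mk x ⁻¹' Δε) = Icc (x * y) (x / y) := by
  have hy : 0 < y := hx.trans_le hxy
  ext z
  simp only [Δε, mem_preimage, mem_ofPred_eq, mem_Icc, le_div_iff₀ hy]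
  constructor
  · rintro ⟨-, -, -, hyz, -, hxy⟩
    exact ⟨hxy, by linarith⟩
  · rintro ⟨hxy, hyz⟩
    have hz : 0 < z := (mul_pos hx hy).trans_le hxy
    exact ⟨hx, hy, hz, by linarith, by nlinarith, hxy⟩

theorem volume_preimage_Δε {x : ℝ} (hx : x ∈ Ioc 0 1) :
    volume (Prod.mk x ⁻¹' Δε) = ENNReal.ofReal (-(x * log x)) := by
  obtain ⟨hx₀, hx₁⟩ := hx
  have hleft : ∀ y ∈ Icc 0 x, 0 ≤ y / x - x * y := fun y hy ↦ by
    rw [sub_nonneg, le_div_iff₀ hx₀]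
    nlinarith [mul_nonneg (mul_nonneg hy.1 (sub_nonneg.2 hx₁)) hx₀.le]
  have hright : ∀ y ∈ Icc x 1, 0 ≤ x / y - x * y := fun y hy ↦ by
    rw [sub_nonneg, le_div_iff₀ (hx₀.trans_le hy.1)]
    nlinarith [mul_nonneg (mul_nonneg hx₀.le (sub_nonneg.2 hy.2)) (hx₀.trans_le hy.1).le]
  have hcont : ContinuousOn (fun y ↦ x / y - x * y) (Icc x 1) :=
    (continuousOn_const.div continuousOn_id fun y hy ↦ (hx₀.trans_le hy.1).ne').sub
      (continuousOn_const.mul continuousOn_id)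
  have hsmall : ∫⁻ y in Ioc 0 x, volume (Prod.mk y ⁻¹' (Prod.mk x ⁻¹' Δε)) =
      ENNReal.ofReal (∫ y in 0..x, (y / x - x * y)) := by
    rw [setLIntegral_congr_fun measurableSet_Ioc (fun y hy ↦ by
      rw [preimage_preimage_Δε_of_le hy.1 hy.2, volume_Icc])]
    exact setLIntegral_Ioc_ofReal_eq hx₀.le (by fun_prop) fun y hy ↦
      hleft y (Ioc_subset_Icc_self hy)
  have hlarge : ∫⁻ y in Ioc x 1, volume (Prod.mk y ⁻¹' (Prod.mk x ⁻¹' Δε)) =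
      ENNReal.ofReal (∫ y in x..1, (x / y - x * y)) := by
    rw [setLIntegral_congr_fun measurableSet_Ioc (fun y hy ↦ by
      rw [preimage_preimage_Δε_of_ge hx₀ hy.1.le, volume_Icc])]
    exact setLIntegral_Ioc_ofReal_eq hx₁ hcont fun y hy ↦ hright y (Ioc_subset_Icc_self hy)
  rw [Measure.volume_eq_prod, Measure.prod_apply_eq_setLIntegral
      (measurableSet_Δε.preimage measurable_prodMk_left) fun p hp ↦ (mem_Ioc_of_mem_Δε hp).2,
    ← Ioc_union_Ioc_eq_Ioc hx₀.le hx₁,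
    lintegral_union measurableSet_Ioc (Ioc_disjoint_Ioc_of_le le_rfl), hsmall, hlarge,
    ← ENNReal.ofReal_add (integral_nonneg hx₀.le hleft) (integral_nonneg hx₁ hright),
    integral_id_div_sub_const_mul, integral_const_div_sub_const_mul hx₀]
  ring_nf

theorem volume_Δε : volume Δε = 1 / 4 := by
  rw [Measure.volume_eq_prod, Measure.prod_apply_eq_setLIntegral measurableSet_Δε
      fun p hp ↦ (mem_Ioc_of_mem_Δε hp).1,
    setLIntegral_congr_fun measurableSet_Ioc fun x hx ↦ volume_preimage_Δε hx,
    setLIntegral_Ioc_ofReal_eq (f := fun x ↦ -(x * log x)) zero_le_one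
      continuous_mul_log.neg.continuousOn fun x hx ↦
        neg_nonneg.2 (mul_nonpos_of_nonneg_of_nonpos hx.1.le (log_nonpos hx.1.le hx.2)),
    integral_neg_mul_log, ENNReal.ofReal_div_of_pos (by norm_num)]
  norm_num

theorem iterated_integral_one_eq :
    (∫ z in (0 : ℝ)..1,
      ((∫ x in (0 : ℝ)..z, ∫ _y in (z * x)..(x / z), (1 : ℝ)) +
        ∫ x in z..(1 : ℝ), ∫ _y in (x * z)..(z / x), (1 : ℝ))) = 1 / 4 := by
  rw [← integral_neg_mul_log]
  refine integral_congr fun z hz ↦ ?_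
  rw [uIcc_of_le zero_le_one] at hz
  rcases hz.1.eq_or_lt with rfl | hz₀
  · simp
  simp only [intervalIntegral.integral_const, smul_eq_mul, mul_one]
  simp_rw [mul_comm _ z]
  rw [integral_id_div_sub_const_mul, integral_const_div_sub_const_mul hz₀]
  ring

theorem stmt_19 :
    volume Δε = 1 / 4 ∧
    (∫ z in (0 : ℝ)..1,
      ((∫ x in (0 : ℝ)..z, ∫ _y in (z * x)..(x / z), (1 : ℝ)) +
        ∫ x in z..(1 : ℝ), ∫ _y in (x * z)..(z / x), (1 : ℝ))) = 1 / 4 :=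
  ⟨volume_Δε, iterated_integral_one_eq⟩
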